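/- For every σ > 0 and all indices i, j, the centered isotropic Gaussian measure μ_σ on ℝ^P assigns equal mass to all Voronoï cells of the unit P-simplex vertices: μ_σ(B_i) = μ_σ(B_j). -/

import Mathlib

open scoped BigOperators

/-- The all-ones vector in `ℝ^P`. -/
noncomputable def onesVec (P : ℕ) : EuclideanSpace ℝ (Fin P) :=
  (WithLp.equiv 2 (Fin P → ℝ)).symm fun _ => 1

/-- The vertices of the unit `P`-simplex: for `j < P`,
`v_j = √((P+1)/P) • e_j − ((√(P+1) − 1)/(P√P)) • 𝟏`, and `v_{P+1} = −(1/√P) • 𝟏`. -/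
noncomputable def simplexVertex (P : ℕ) (j : Fin (P + 1)) : EuclideanSpace ℝ (Fin P) :=
  if h : (j : ℕ) < P then
    Real.sqrt ((P + 1) / P) • EuclideanSpace.single ⟨(j : ℕ), h⟩ (1 : ℝ)
      - ((Real.sqrt (P + 1) - 1) / (P * Real.sqrt P)) • onesVec P
  else
    (-1 / Real.sqrt P) • onesVec P

/-- The Voronoï cell of the `k`-th simplex vertex:
`B_k = {z : ‖z − v_k‖ ≤ ‖z − v_i‖ for all i}`. -/
def voronoiCell (P : ℕ) (k : Fin (P + 1)) : Set (EuclideanSpace ℝ (Fin P)) :=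
  {z | ∀ i : Fin (P + 1), ‖z - simplexVertex P k‖ ≤ ‖z - simplexVertex P i‖}


/-- The centered isotropic Gaussian measure on `ℝ^P` with variance `σ²`, given by the density
`(2πσ²)^{−P/2} exp(−‖z‖²/(2σ²))` with respect to Lebesgue measure. -/
noncomputable def gaussianMeasure (P : ℕ) (σ : ℝ) :
    MeasureTheory.Measure (EuclideanSpace ℝ (Fin P)) :=
  MeasureTheory.volume.withDensity fun z =>
    ENNReal.ofReal ((2 * Real.pi * σ ^ 2) ^ (-(P : ℝ) / 2) * Real.exp (-‖z‖ ^ 2 / (2 * σ ^ 2)))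

/-!
The vertices have Gram matrix `1` on the diagonal and `-1/P` off it. Hence the reflection in the
perpendicular bisector of `v_i v_j` swaps `v_i` and `v_j` and fixes every other vertex, so it maps
`B_i` onto `B_j`. Being a linear isometry, it preserves the radial density of `μ_σ`.
-/

open MeasureTheory RealInnerProductSpace

section Voronoi

variable {ι X : Type*} [PseudoMetricSpace X]

def voronoiCellOf (v : ι → X) (k : ι) : Set X :=
  {z | ∀ i, dist z (v k) ≤ dist z (v i)}

theorem isClosed_voronoiCellOf (v : ι → X) (k : ι) : IsClosed (voronoiCellOf v k) := by
  simp only [voronoiCellOf, Set.ofPred_forall]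
  exact isClosed_iInter fun i =>
    isClosed_le (continuous_id.dist continuous_const) (continuous_id.dist continuous_const)

theorem IsometryEquiv.preimage_voronoiCellOf (e : X ≃ᵢ X) {v : ι → X} (τ : Equiv.Perm ι)
    (he : ∀ k, e (v k) = v (τ k)) (k : ι) :
    e ⁻¹' voronoiCellOf v (τ k) = voronoiCellOf v k := by
  ext z
  simp only [voronoiCellOf, Set.mem_preimage, Set.mem_ofPred_eq]
  rw [← τ.forall_congr_right]
  simp only [← he, e.dist_eq]

end Voronoi

theorem voronoiCell_eq_voronoiCellOf (P : ℕ) (k : Fin (P + 1)) :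
    voronoiCell P k = voronoiCellOf (simplexVertex P) k := by
  simp only [voronoiCell, voronoiCellOf, dist_eq_norm]

section Reflection

variable {ι E : Type*} [NormedAddCommGroup E] [InnerProductSpace ℝ E] [DecidableEq ι]

theorem reflection_orthogonal_sub_apply {v : ι → E} {i j : ι} (hnorm : ‖v i‖ = ‖v j‖)
    (hinner : ∀ k, k ≠ i → k ≠ j → ⟪v i, v k⟫ = ⟪v j, v k⟫) (k : ι) :
    (ℝ ∙ (v i - v j))ᗮ.reflection (v k) = v (Equiv.swap i j k) := by
  have hi : (ℝ ∙ (v i - v j))ᗮ.reflection (v i) = v j := Submodule.reflection_sub hnorm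
  rcases eq_or_ne k i with rfl | hki
  · rw [Equiv.swap_apply_left, hi]
  rcases eq_or_ne k j with rfl | hkj
  · rw [Equiv.swap_apply_right]
    simpa only [hi] using (ℝ ∙ (v i - v k))ᗮ.reflection_reflection (v i)
  rw [Equiv.swap_apply_of_ne_of_ne hki hkj]
  refine Submodule.reflection_mem_subspace_eq_self ?_
  rw [Submodule.mem_orthogonal_singleton_iff_inner_right, inner_sub_left, hinner k hki hkj,
    sub_self]

end Reflection

section Gaussian

variable {E : Type*} [NormedAddCommGroup E] [InnerProductSpace ℝ E] [FiniteDimensional ℝ E]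
  [MeasurableSpace E] [BorelSpace E]

theorem LinearIsometryEquiv.measurePreserving_withDensity_norm (f : ℝ → ENNReal)
    (e : E ≃ₗᵢ[ℝ] E) :
    MeasurePreserving e (volume.withDensity fun z => f ‖z‖)
      (volume.withDensity fun z => f ‖z‖) := by
  refine ⟨e.continuous.measurable, Measure.ext fun s hs => ?_⟩
  rw [Measure.map_apply e.continuous.measurable hs, withDensity_apply _ hs,
    withDensity_apply _ (e.continuous.measurable hs)]
  simpa only [e.norm_map] using e.measurePreserving.setLIntegral_comp_preimage_emb
    e.toHomeomorph.toMeasurableEquiv.measurableEmbedding (fun z => f ‖z‖) s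

end Gaussian

theorem measurePreserving_gaussianMeasure (P : ℕ) (σ : ℝ)
    (e : EuclideanSpace ℝ (Fin P) ≃ₗᵢ[ℝ] EuclideanSpace ℝ (Fin P)) :
    MeasurePreserving e (gaussianMeasure P σ) (gaussianMeasure P σ) :=
  e.measurePreserving_withDensity_norm fun r =>
    ENNReal.ofReal ((2 * Real.pi * σ ^ 2) ^ (-(P : ℝ) / 2) * Real.exp (-r ^ 2 / (2 * σ ^ 2)))

theorem EuclideanSpace.inner_single_one_single_one {ι : Type*} [Fintype ι] [DecidableEq ι]
    (m m' : ι) :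
    ⟪EuclideanSpace.single m (1 : ℝ), EuclideanSpace.single m' 1⟫ = if m = m' then 1 else 0 :=
  orthonormal_iff_ite.mp EuclideanSpace.orthonormal_single m m'

section Simplex

variable {P : ℕ}

theorem inner_onesVec_onesVec : ⟪onesVec P, onesVec P⟫ = P := by
  simp [onesVec, EuclideanSpace.norm_eq]

theorem inner_single_onesVec (m : Fin P) :
    ⟪EuclideanSpace.single m (1 : ℝ), onesVec P⟫ = 1 := by
  simp [onesVec, EuclideanSpace.inner_single_left]

theorem inner_onesVec_single (m : Fin P) :
    ⟪onesVec P, EuclideanSpace.single m (1 : ℝ)⟫ = 1 := by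
  rw [real_inner_comm, inner_single_onesVec]

theorem simplexVertex_castSucc (m : Fin P) :
    simplexVertex P m.castSucc = √((P + 1) / P) • EuclideanSpace.single m (1 : ℝ)
      - ((√(P + 1) - 1) / (P * √P)) • onesVec P := by
  simp [simplexVertex]

theorem simplexVertex_last : simplexVertex P (Fin.last P) = (-1 / √(P : ℝ)) • onesVec P := by
  simp [simplexVertex]

theorem inner_simplexVertex (hP : P ≠ 0) (k l : Fin (P + 1)) :
    ⟪simplexVertex P k, simplexVertex P l⟫ = if k = l then 1 else -1 / (P : ℝ) := by
  have hP1_sq : √((P : ℝ) + 1) ^ 2 = P + 1 := Real.sq_sqrt (by positivity)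
  have hP_sq : √(P : ℝ) ^ 2 = P := Real.sq_sqrt (by positivity)
  have hsqrt_div : √(((P : ℝ) + 1) / P) = √((P : ℝ) + 1) / √P :=
    Real.sqrt_div' _ (Nat.cast_nonneg P)
  induction k using Fin.lastCases <;> induction l using Fin.lastCases <;>
    simp only [simplexVertex_castSucc, simplexVertex_last, inner_sub_left, inner_sub_right,
      real_inner_smul_left, real_inner_smul_right, EuclideanSpace.inner_single_one_single_one,
      inner_single_onesVec, inner_onesVec_single, inner_onesVec_onesVec, hsqrt_div, ↓reduceIte,
      Fin.castSucc_inj, Fin.castSucc_ne_last, (Fin.castSucc_ne_last _).symm]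
  all_goals (try split_ifs) <;> field_simp
  case last.last => linear_combination -hP_sq
  case last.cast => linear_combination hP_sq
  case cast.last => linear_combination hP_sq
  case pos => linear_combination ((P : ℝ) - 1) * hP1_sq - P * hP_sq
  case neg => linear_combination hP_sq - hP1_sq

theorem norm_simplexVertex (hP : P ≠ 0) (k : Fin (P + 1)) : ‖simplexVertex P k‖ = 1 := by
  have h := inner_simplexVertex hP k k
  rw [if_pos rfl, real_inner_self_eq_norm_sq] at h
  exact (pow_eq_one_iff_of_nonneg (norm_nonneg _) two_ne_zero).mp h

end Simplex

theorem gaussianMeasure_voronoiCell_eq_general (P : ℕ) (σ : ℝ)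
    (i j : Fin (P + 1)) :
    gaussianMeasure P σ (voronoiCell P i) = gaussianMeasure P σ (voronoiCell P j) := by
  obtain rfl | hP := eq_or_ne P 0
  · rw [Subsingleton.elim (α := Fin 1) i j]
  let R := (ℝ ∙ (simplexVertex P i - simplexVertex P j))ᗮ.reflection
  have hR : ∀ k, R (simplexVertex P k) = simplexVertex P (Equiv.swap i j k) :=
    reflection_orthogonal_sub_apply (by rw [norm_simplexVertex hP, norm_simplexVertex hP])
      fun k hki hkj => by
        rw [inner_simplexVertex hP, inner_simplexVertex hP, if_neg hki.symm, if_neg hkj.symm]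
  have hcell : R ⁻¹' voronoiCell P j = voronoiCell P i := by
    simpa only [voronoiCell_eq_voronoiCellOf, Equiv.swap_apply_left,
      LinearIsometryEquiv.coe_toIsometryEquiv] using
      R.toIsometryEquiv.preimage_voronoiCellOf (Equiv.swap i j) hR i
  have hmeas : MeasurableSet (voronoiCell P j) := by
    rw [voronoiCell_eq_voronoiCellOf]
    exact (isClosed_voronoiCellOf _ _).measurableSet
  rw [← hcell,
    (measurePreserving_gaussianMeasure P σ R).measure_preimage hmeas.nullMeasurableSet]

/-- The centered isotropic Gaussian measure assigns equal mass to all Voronoï cells of the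
unit `P`-simplex vertices. -/
theorem gaussianMeasure_voronoiCell_eq (P : ℕ) (hP : 1 ≤ P) (σ : ℝ) (hσ : 0 < σ)
    (i j : Fin (P + 1)) :
    gaussianMeasure P σ (voronoiCell P i) = gaussianMeasure P σ (voronoiCell P j) :=
  gaussianMeasure_voronoiCell_eq_general P σ i j
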